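/- Let (A, φ) be a noncommutative probability space, Φ̃ : H_S(A) → ℂ the character extending φ, and β̃ the infinitesimal character on H_S(A) satisfying Φ̃ = ε_A + Φ̃ ≻̃ β̃. Let t ∈ ST(n) be decorated by a_1⋯a_n, let t' be the subtree of t rooted at the leftmost child of the root (decorated by a_1⋯a_m, with t' the single-leaf tree and m = 0 if that child is a leaf), and let t'' be the Schröder tree obtained from t by replacing t' by a leaf (decorated by a_{m+1}⋯a_n). Then Φ̃(t ⊗ a_1⋯a_n) = β̃(t ⊗ a_1⋯a_n) + Φ̃(t'' ⊗ a_{m+1}⋯a_n) · β̃(t' ⊗ a_1⋯a_m), where β̃ applied to the unit (single-leaf tree with empty decoration) is 0. -/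

import Mathlib

open scoped BigOperators

/-- Planar rooted trees (rose trees). -/
inductive PTree : Type
  | node : List PTree → PTree

namespace PTree

/-- The single-vertex tree (a leaf). -/
abbrev leaf : PTree := .node []

/-- Subtree at a given path from the root (entries select children). -/
def subtreeAt : List ℕ → PTree → Option PTree
  | [], t => some t
  | i :: p, node cs => (cs[i]?).bind (subtreeAt p)

/-- `p` is (the path of) a vertex of `t`. -/
def IsVertex (t : PTree) (p : List ℕ) : Prop := (subtreeAt p t).isSome

/-- `p` is a leaf of `t`. -/
def IsLeafAt (t : PTree) (p : List ℕ) : Prop := subtreeAt p t = some leaf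

/-- `p` is an internal (non-leaf) vertex of `t`. -/
def IsInternalAt (t : PTree) (p : List ℕ) : Prop :=
  ∃ cs, subtreeAt p t = some (node cs) ∧ cs ≠ []

/-- Schröder trees: every internal vertex has at least two children. -/
inductive IsSchroder : PTree → Prop
  | leaf : IsSchroder (node [])
  | node (cs : List PTree) : 2 ≤ cs.length → (∀ c ∈ cs, IsSchroder c) → IsSchroder (node cs)

/-- Number of leaves of a tree. -/
noncomputable def numLeaves (t : PTree) : ℕ := Nat.card {p : List ℕ // IsLeafAt t p}

/-- Number of sectors between consecutive leaves. -/
noncomputable def numSectors (t : PTree) : ℕ := numLeaves t - 1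

/-- Number of internal vertices. -/
noncomputable def numInternal (t : PTree) : ℕ := Nat.card {p : List ℕ // IsInternalAt t p}

/-- The set of Schröder trees with `n+1` leaves. -/
def ST (n : ℕ) : Set PTree := {t | IsSchroder t ∧ numLeaves t = n + 1}

/-- Number of surjective strictly order-preserving maps from the poset of internal
vertices of `t` (i.e. the vertex poset of the skeleton `sk(t)`, with the root minimal,
the order being the ancestor/prefix order) onto `{1, …, k}`. This is `ω_k(sk(t))`. -/
noncomputable def omegaSkK (t : PTree) (k : ℕ) : ℕ :=
  Nat.card {f : {p : List ℕ // IsInternalAt t p} → Fin k //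
    Function.Surjective f ∧ ∀ v w, v.1 <+: w.1 → v ≠ w → f v < f w}

/-- The Murua coefficient `ω(sk(t))` of the skeleton of `t`. -/
noncomputable def omegaSk (t : PTree) : ℂ :=
  ∑ k ∈ Finset.Icc 1 (numInternal t), ((-1 : ℂ) ^ (k + 1) / (k : ℂ)) * (omegaSkK t k : ℂ)

/-- The subtree of `t` at path `p` (junk value: a leaf). -/
noncomputable def subtree! (t : PTree) (p : List ℕ) : PTree := (subtreeAt p t).getD leaf

/-- Number of leaves of `t` strictly to the left of the subtree at `p`. -/
noncomputable def leavesBefore (t : PTree) (p : List ℕ) : ℕ :=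
  Nat.card {q : List ℕ // IsLeafAt t q ∧ List.Lex (· < ·) q p ∧ ¬ p <+: q}

/-- Sector number `i` (0-indexed: the sector between the `(i+1)`-st and `(i+2)`-nd leaves of `t`)
lies strictly inside the subtree of `t` rooted at `p`. -/
def SectorIn (t : PTree) (p : List ℕ) (i : ℕ) : Prop :=
  leavesBefore t p ≤ i ∧ i + 2 ≤ leavesBefore t p + numLeaves (subtree! t p)

/-- The internal vertex `v` of `t` owns sector `i`: the sector lies in the corolla at `v`,
i.e. inside the subtree at `v` but not inside the subtree at any strictly deeper vertex. -/
def OwnsSector (t : PTree) (v : List ℕ) (i : ℕ) : Prop :=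
  IsInternalAt t v ∧ SectorIn t v i ∧
    ∀ w, IsInternalAt t w → v <+: w → w ≠ v → ¬ SectorIn t w i

/-- Sectors `i` and `j` belong to the same block of the noncrossing partition `π(t)`. -/
def SameOwner (t : PTree) (i j : ℕ) : Prop := ∃ v, OwnsSector t v i ∧ OwnsSector t v j

open Classical in
/-- `φ_{π(t)}(a_1,…,a_n)`: the product over the blocks of the noncrossing partition `π(t)`
(one block per internal vertex `v`, consisting of the sectors owned by `v`) of `φ` applied to
the ordered product of the corresponding letters of `w`. -/
noncomputable def phiPi {A : Type*} [Ring A] (φ : A → ℂ) (t : PTree) (w : List A) : ℂ :=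
  ∏ᶠ v ∈ {v : List ℕ | IsInternalAt t v},
    φ ((((List.range w.length).filter fun i => OwnsSector t v i).map fun i => w.getD i 0).prod)

/-- A corolla: a root whose (at least two) children are all leaves. -/
def corolla (m : ℕ) : PTree := node (List.replicate m leaf)

/-- `t` is a corolla. -/
def IsCorolla (t : PTree) : Prop := ∃ m, 2 ≤ m ∧ t = corolla m

/-- Graft a tree `s` onto the leftmost leaf of `t`. -/
def graftLeftmost : PTree → PTree → PTree
  | node [], s => s
  | node (c :: cs), s => node (graftLeftmost c s :: cs)

/-- Trees obtained from the single-vertex tree by repeatedly grafting a corolla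
onto the leftmost leaf. -/
inductive IsBST : PTree → Prop
  | single : IsBST leaf
  | graft (t : PTree) (m : ℕ) : IsBST t → 2 ≤ m → IsBST (graftLeftmost t (corolla m))

/-- Schröder trees whose leftmost child of the root is a leaf. -/
def IsPST (t : PTree) : Prop := ∃ cs, t = node (leaf :: cs)

end PTree
namespace PTree

mutual
  /-- List of all vertex paths of a tree. -/
  def verticesList : PTree → List (List ℕ)
    | .node cs => [] :: verticesListAux 0 cs
  def verticesListAux : ℕ → List PTree → List (List ℕ)
    | _, [] => []
    | i, c :: cs => (verticesList c).map (i :: ·) ++ verticesListAux (i + 1) cs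
end

open Classical in
/-- The `Finset` of internal vertices of `t`. -/
noncomputable def internalFinset (t : PTree) : Finset (List ℕ) :=
  ((verticesList t).filter fun p => decide (IsInternalAt t p)).toFinset

open Classical in
/-- The admissible cuts of a Schröder tree `t`: sets of internal vertices such that every
path from the root to a leaf contains at most one of them (equivalently, antichains for
the ancestor/prefix order). -/
noncomputable def cutsFinset (t : PTree) : Finset (Finset (List ℕ)) :=
  (internalFinset t).powerset.filter fun c => ∀ v ∈ c, ∀ w ∈ c, v ≠ w → ¬ v <+: w

/-- A vertex path lies on the leftmost branch iff it consists of zeros. -/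
def OnLeftBranch (v : List ℕ) : Prop := v = List.replicate v.length 0

open Classical in
/-- `Adm_≺(t)`: admissible cuts whose trunk contains the leftmost leaf of `t`,
i.e. cuts containing no vertex of the leftmost branch. -/
noncomputable def cutsPrecFinset (t : PTree) : Finset (Finset (List ℕ)) :=
  (cutsFinset t).filter fun c => ∀ v ∈ c, ¬ OnLeftBranch v

open Classical in
/-- `Adm(t) \ Adm_≺(t)`: the admissible cuts containing a vertex of the leftmost branch. -/
noncomputable def cutsSuccFinset (t : PTree) : Finset (Finset (List ℕ)) :=
  (cutsFinset t).filter fun c => ∃ v ∈ c, OnLeftBranch v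

/-- Replace the subtree at a given path by a leaf. -/
def replaceLeaf : List ℕ → PTree → PTree
  | [], _ => leaf
  | i :: p, node cs => node (cs.set i (replaceLeaf p (cs.getD i leaf)))

/-- The vertices of a cut, sorted from left to right. -/
noncomputable def sortCut (t : PTree) (c : Finset (List ℕ)) : List (List ℕ) :=
  c.toList.mergeSort fun v w => Nat.ble (leavesBefore t v) (leavesBefore t w)

/-- The trunk `R_c(t)`: replace the subtree at each vertex of the cut by a leaf. -/
noncomputable def trunkTree (t : PTree) (c : Finset (List ℕ)) : PTree :=
  (sortCut t c).foldl (fun s v => replaceLeaf v s) t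

open Classical in
/-- Sector `i` of `t` is removed by the cut `c` (it lies in one of the pruned subtrees). -/
noncomputable def RemovedIdx (t : PTree) (c : Finset (List ℕ)) (i : ℕ) : Prop :=
  ∃ v ∈ c, leavesBefore t v ≤ i ∧ i < leavesBefore t v + numSectors (subtree! t v)

/-- A decorated forest: a list of Schröder trees, each `t` decorated by a word of length
`numSectors t` labelling the sectors between consecutive leaves from left to right. -/
abbrev DForest (A : Type*) := List (PTree × List A)

/-- A genuine decorated tree: a non-unit Schröder tree with matching decoration. -/
def GoodTree {A : Type*} (d : PTree × List A) : Prop :=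
  IsSchroder d.1 ∧ d.1 ≠ leaf ∧ d.2.length = numSectors d.1

/-- A genuine decorated forest. -/
def GoodForest {A : Type*} (F : DForest A) : Prop := ∀ d ∈ F, GoodTree d

open Classical in
/-- The decoration of the trunk `R_c(t ⊗ w)`: the letters of `w` at the sectors
not removed by the cut, in their original order. -/
noncomputable def trunkWord {A : Type*} [Zero A] (t : PTree) (c : Finset (List ℕ))
    (w : List A) : List A :=
  (((List.range w.length).filter fun i => decide (¬ RemovedIdx t c i)).map fun i => w.getD i 0)

open Classical in
/-- The trunk `R_c(t ⊗ w)` as a decorated forest (empty if the trunk is the unit,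
i.e. the single-leaf tree, which is identified with `1`). -/
noncomputable def trunkPart {A : Type*} [Zero A] (d : PTree × List A)
    (c : Finset (List ℕ)) : DForest A :=
  if trunkTree d.1 c = leaf then [] else [(trunkTree d.1 c, trunkWord d.1 c d.2)]

/-- The pruning `P_c(t ⊗ w)`: the ordered forest of decorated subtrees rooted at the
vertices of the cut (left to right), each carrying the contiguous subword of `w`
decorating its sectors. -/
noncomputable def prunePart {A : Type*} (d : PTree × List A)
    (c : Finset (List ℕ)) : DForest A :=
  (sortCut d.1 c).map fun v =>
    (subtree! d.1 v, (d.2.drop (leavesBefore d.1 v)).take (numSectors (subtree! d.1 v)))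

/-- All splittings `R_c(F) ⊗ P_c(F)` of a decorated forest given by tuples of admissible
cuts (one cut per tree): the combinatorial coproduct `δ_A`. -/
noncomputable def forestSplits {A : Type*} [Zero A] :
    DForest A → List (DForest A × DForest A)
  | [] => [([], [])]
  | d :: ds => (cutsFinset d.1).toList.flatMap fun c =>
      (forestSplits ds).map fun pr => (trunkPart d c ++ pr.1, prunePart d c ++ pr.2)

/-- The splittings appearing in `δ_{≺,A}`: the first tree is cut along `Adm_≺`, the
remaining ones along all admissible cuts. -/
noncomputable def forestSplitsPrec {A : Type*} [Zero A] :
    DForest A → List (DForest A × DForest A)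
  | [] => []
  | d :: ds => (cutsPrecFinset d.1).toList.flatMap fun c =>
      (forestSplits ds).map fun pr => (trunkPart d c ++ pr.1, prunePart d c ++ pr.2)

/-- The splittings appearing in `δ_{≻,A} = δ_A − δ_{≺,A}`. -/
noncomputable def forestSplitsSucc {A : Type*} [Zero A] :
    DForest A → List (DForest A × DForest A)
  | [] => []
  | d :: ds => (cutsSuccFinset d.1).toList.flatMap fun c =>
      (forestSplits ds).map fun pr => (trunkPart d c ++ pr.1, prunePart d c ++ pr.2)

/-- The convolution product `f * g = m_ℂ ∘ (f ⊗ g) ∘ δ_A` of linear functionals on the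
Hopf algebra `H_S(A)` of decorated Schröder trees (described on the basis of decorated
forests). -/
noncomputable def convD {A : Type*} [Zero A] (f g : DForest A → ℂ) : DForest A → ℂ :=
  fun F => ((forestSplits F).map fun pr => f pr.1 * g pr.2).sum

/-- The left half-shuffle product `f ≺̃ g = m_ℂ ∘ (f ⊗ g) ∘ δ_{≺,A}`. -/
noncomputable def precD {A : Type*} [Zero A] (f g : DForest A → ℂ) : DForest A → ℂ :=
  fun F => ((forestSplitsPrec F).map fun pr => f pr.1 * g pr.2).sum

/-- The right half-shuffle product `f ≻̃ g = m_ℂ ∘ (f ⊗ g) ∘ δ_{≻,A}`. -/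
noncomputable def succD {A : Type*} [Zero A] (f g : DForest A → ℂ) : DForest A → ℂ :=
  fun F => ((forestSplitsSucc F).map fun pr => f pr.1 * g pr.2).sum

open Classical in
/-- The counit `ε_A` of `H_S(A)` as a functional. -/
noncomputable def epsD {A : Type*} : DForest A → ℂ := fun F => if F = [] then 1 else 0

open Classical in
/-- The character `Φ̃ : H_S(A) → ℂ` extending `φ`: it sends a decorated tree `t ⊗ w` to
`φ(a_1 ⋯ a_n)` if `t` is a corolla and to `0` otherwise, multiplicatively on forests. -/
noncomputable def charD {A : Type*} [Ring A] (φ : A → ℂ) : DForest A → ℂ :=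
  fun F => (F.map fun d => if IsCorolla d.1 then φ d.2.prod else 0).prod

/-- `Φ̂ = Φ̃ − ε_A`. -/
noncomputable def charHatD {A : Type*} [Ring A] (φ : A → ℂ) : DForest A → ℂ :=
  fun F => charD φ F - epsD F

/-- Convolution powers `f^{*k}` (with `f^{*0} = ε_A`). -/
noncomputable def convPowD {A : Type*} [Zero A] (f : DForest A → ℂ) : ℕ → DForest A → ℂ
  | 0 => epsD
  | k + 1 => convD f (convPowD f k)

/-- Left half-shuffle powers `α^{≺̃ k}`, with `α^{≺̃ 0} = ε_A` and
`α^{≺̃ k} = α ≺̃ α^{≺̃ (k−1)}`. -/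
noncomputable def precPowD {A : Type*} [Zero A] (α : DForest A → ℂ) : ℕ → DForest A → ℂ
  | 0 => epsD
  | k + 1 => precD α (precPowD α k)

/-- Right half-shuffle powers `α^{≻̃ k}`, with `α^{≻̃ 0} = ε_A` and
`α^{≻̃ k} = α^{≻̃ (k−1)} ≻̃ α`. -/
noncomputable def succPowD {A : Type*} [Zero A] (α : DForest A → ℂ) : ℕ → DForest A → ℂ
  | 0 => epsD
  | k + 1 => succD (succPowD α k) α

/-- The left half-shuffle exponential `E_≺̃(α) = Σ_{k ≥ 0} α^{≺̃ k}`. -/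
noncomputable def ePrecD {A : Type*} [Zero A] (α : DForest A → ℂ) : DForest A → ℂ :=
  fun F => ∑ᶠ k : ℕ, precPowD α k F

/-- The right half-shuffle exponential `E_≻̃(α) = Σ_{k ≥ 0} α^{≻̃ k}`. -/
noncomputable def eSuccD {A : Type*} [Zero A] (α : DForest A → ℂ) : DForest A → ℂ :=
  fun F => ∑ᶠ k : ℕ, succPowD α k F

/-- The convolution exponential `exp^*(α) = Σ_{k ≥ 0} α^{*k} / k!`. -/
noncomputable def expStarD {A : Type*} [Zero A] (α : DForest A → ℂ) : DForest A → ℂ :=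
  fun F => ∑ᶠ k : ℕ, ((k.factorial : ℂ))⁻¹ * convPowD α k F

/-- The convolution logarithm `log^*(Φ̃) = Σ_{k ≥ 1} ((−1)^{k+1}/k) (Φ̃ − ε_A)^{*k}`. -/
noncomputable def logStarD {A : Type*} [Ring A] (φ : A → ℂ) : DForest A → ℂ :=
  fun F => ∑ᶠ k ∈ Set.Ici (1 : ℕ), ((-1 : ℂ) ^ (k + 1) / (k : ℂ)) * convPowD (charHatD φ) k F

/-- An infinitesimal character of `H_S(A)`: it vanishes on the unit (empty forest) and on
products of two or more nonempty forests. -/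
def IsInfCharD {A : Type*} (α : DForest A → ℂ) : Prop :=
  α [] = 0 ∧ ∀ F G : DForest A, F ≠ [] → G ≠ [] → α (F ++ G) = 0

end PTree


namespace PTree

section Aux
variable {A : Type*}

lemma subtreeAt_nil (t : PTree) : subtreeAt [] t = some t := rfl

lemma isLeafAt_leaf_iff (p : List ℕ) : IsLeafAt leaf p ↔ p = [] := by
  constructor
  · intro h
    cases p with
    | nil => rfl
    | cons i q => simp [IsLeafAt, subtreeAt] at h
  · rintro rfl; rfl

lemma numLeaves_leaf : numLeaves leaf = 1 := by
  have : Unique {p : List ℕ // IsLeafAt leaf p} := by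
    refine ⟨⟨⟨[], rfl⟩⟩, ?_⟩
    rintro ⟨p, hp⟩
    simp only [isLeafAt_leaf_iff] at hp
    subst hp; rfl
  exact Nat.card_unique

lemma filter_range_le (n m : ℕ) :
    (List.range n).filter (fun i => decide (m ≤ i)) = (List.range n).drop m := by
  induction n with
  | zero => simp
  | succ n ih =>
    rw [List.range_succ, List.filter_append, ih]
    by_cases h : m ≤ n
    · rw [List.drop_append_of_le_length (by simpa using h)]
      simp [h]
    · have h1 : n < m := not_le.mp h
      rw [List.drop_of_length_le (by simp; omega), List.drop_of_length_le (by simp; omega)]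
      simp [h]

lemma map_getD_drop_range [Zero A] (w : List A) (m : ℕ) :
    (((List.range w.length).drop m).map (fun i => w.getD i 0)) = w.drop m := by
  apply List.ext_getElem
  · simp
  · intro i h1 h2
    simp only [List.getElem_map, List.getElem_drop, List.getElem_range]
    rw [List.getD_eq_getElem _ _ (by simp at h1; omega)]

lemma leavesBefore_nil (t : PTree) : leavesBefore t [] = 0 := by
  have : IsEmpty {q : List ℕ // IsLeafAt t q ∧ List.Lex (· < ·) q [] ∧ ¬ ([] : List ℕ) <+: q} := by
    refine ⟨?_⟩
    rintro ⟨q, -, -, h⟩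
    exact h List.nil_prefix
  exact Nat.card_of_isEmpty

lemma leavesBefore_zero (t : PTree) (hne : t ≠ leaf) : leavesBefore t [0] = 0 := by
  have : IsEmpty
      {q : List ℕ // IsLeafAt t q ∧ List.Lex (· < ·) q [0] ∧ ¬ ([0] : List ℕ) <+: q} := by
    refine ⟨?_⟩
    rintro ⟨q, hl, hlex, hpre⟩
    cases q with
    | nil =>
      apply hne
      simpa [IsLeafAt, subtreeAt] using hl
    | cons a q' =>
      cases hlex with
      | rel h => omega
      | cons h => exact hpre ⟨q', rfl⟩
  exact Nat.card_of_isEmpty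

lemma sortCut_singleton (t : PTree) (v : List ℕ) : sortCut t {v} = [v] := by
  simp [sortCut]

lemma trunkTree_singleton (t : PTree) (v : List ℕ) :
    trunkTree t {v} = replaceLeaf v t := by
  simp [trunkTree, sortCut_singleton]

lemma prunePart_singleton (d : PTree × List A) (v : List ℕ) :
    prunePart d {v} =
      [(subtree! d.1 v,
        (d.2.drop (leavesBefore d.1 v)).take (numSectors (subtree! d.1 v)))] := by
  simp [prunePart, sortCut_singleton]

lemma sum_map_flatMap_singleton {X Y : Type*} (l : List X) (q : X → Y) (g : Y → ℂ) :
    ((l.flatMap fun c => [q c]).map g).sum = (l.map fun c => g (q c)).sum := by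
  induction l with
  | nil => simp
  | cons a l ih => simp [ih]

lemma mem_internalFinset {t : PTree} {p : List ℕ} :
    p ∈ internalFinset t ↔ p ∈ verticesList t ∧ IsInternalAt t p := by
  simp [internalFinset, List.mem_filter]

lemma mem_cutsFinset {t : PTree} {c : Finset (List ℕ)} :
    c ∈ cutsFinset t ↔
      c ⊆ internalFinset t ∧ ∀ v ∈ c, ∀ w ∈ c, v ≠ w → ¬ v <+: w := by
  simp [cutsFinset, Finset.mem_filter, Finset.mem_powerset]

lemma mem_cutsSuccFinset {t : PTree} {c : Finset (List ℕ)} :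
    c ∈ cutsSuccFinset t ↔ c ∈ cutsFinset t ∧ ∃ v ∈ c, OnLeftBranch v := by
  simp [cutsSuccFinset, Finset.mem_filter]

open Classical in
lemma charD_pair {B : Type*} [Ring B] (φ : B → ℂ) (x : PTree) (y : List B) :
    charD φ [(x, y)] = if IsCorolla x then φ y.prod else 0 := by
  simp [charD]

lemma nil_mem_verticesList (cs : List PTree) : [] ∈ verticesList (node cs) := by
  rw [verticesList]
  exact List.mem_cons_self

lemma zero_mem_verticesList (c0 : PTree) (rest : List PTree) :
    [0] ∈ verticesList (node (c0 :: rest)) := by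
  rw [verticesList, verticesListAux]
  refine List.mem_cons_of_mem _ (List.mem_append_left _ ?_)
  rcases c0 with ⟨ds⟩
  exact List.mem_map_of_mem (nil_mem_verticesList ds)

lemma deep_left_trunk (cs : List PTree) (hcs : cs ≠ []) (v'' : List ℕ)
    (hint : IsInternalAt (node cs) (0 :: 0 :: v'')) :
    replaceLeaf (0 :: 0 :: v'') (node cs) ≠ leaf ∧
      ¬ IsCorolla (replaceLeaf (0 :: 0 :: v'') (node cs)) := by
  obtain ⟨ds, hds, hdsne⟩ := hint
  rcases cs with _ | ⟨c0, rest⟩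
  · exact absurd rfl hcs
  · have hsub : subtreeAt (0 :: v'') c0 = some (node ds) := by
      simpa [subtreeAt] using hds
    rcases c0 with ⟨es⟩
    rcases es with _ | ⟨e0, es'⟩
    · simp [subtreeAt] at hsub
    · have hrep : replaceLeaf (0 :: 0 :: v'') (node (node (e0 :: es') :: rest)) =
          node (node (replaceLeaf v'' e0 :: es') :: rest) := by
        simp [replaceLeaf]
      rw [hrep]
      constructor
      · intro h
        simp at h
      · rintro ⟨m, hm2, hm⟩
        rcases m with _ | m
        · omega
        · rw [corolla, List.replicate_succ] at hm
          injection hm with hm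
          have := List.head_eq_of_cons_eq hm
          simp at this

end Aux
end PTree

open Classical in
/-- Let `(A, φ)` be a noncommutative probability space, `Φ̃` the character
extending `φ` on `H_S(A)`, and `β̃` the infinitesimal character with `Φ̃ = ε_A + Φ̃ ≻̃ β̃`.
Let `t ∈ ST(n)` be decorated by `a_1⋯a_n`, let `t'` be the subtree rooted at the leftmost
child of the root (decorated by `a_1⋯a_m`, where `m` is its number of sectors; `t'` is the
single-leaf tree and `m = 0` if that child is a leaf), and let `t''` be obtained from `t` by
replacing `t'` by a leaf (decorated by `a_{m+1}⋯a_n`). Then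
`Φ̃(t ⊗ a_1⋯a_n) = β̃(t ⊗ a_1⋯a_n) + Φ̃(t'' ⊗ a_{m+1}⋯a_n) · β̃(t' ⊗ a_1⋯a_m)`,
where `β̃` applied to the unit is `0`. -/
theorem boolean_recursion_on_decorated_schroder_trees
    (A : Type*) [Ring A] [Algebra ℂ A] (φ : A →ₗ[ℂ] ℂ) (hφ : φ 1 = 1)
    (β : PTree.DForest A → ℂ) (hβ : PTree.IsInfCharD β)
    (hfix : ∀ F : PTree.DForest A, PTree.GoodForest F →
      PTree.charD (fun x => φ x) F =
        PTree.epsD F + PTree.succD (PTree.charD (fun x => φ x)) β F)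
    (n : ℕ) (hn : 1 ≤ n) (t : PTree) (ht : t ∈ PTree.ST n)
    (w : List A) (hw : w.length = n) :
    PTree.charD (fun x => φ x) [(t, w)] =
      β [(t, w)] +
        PTree.charD (fun x => φ x)
            [(PTree.replaceLeaf [0] t, w.drop (PTree.numSectors (PTree.subtree! t [0])))] *
          (if PTree.subtree! t [0] = PTree.leaf then 0
           else β [(PTree.subtree! t [0], w.take (PTree.numSectors (PTree.subtree! t [0])))]) := by
  open PTree in
  classical
  obtain ⟨hts, htn⟩ := ht
  rcases t with ⟨cs⟩
  have htne : (node cs : PTree) ≠ leaf := by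
    intro h
    rw [h, numLeaves_leaf] at htn
    omega
  have hcsne : cs ≠ [] := by
    intro h
    exact htne (by rw [h])
  rcases cs with _ | ⟨c0, rest⟩
  · exact absurd rfl hcsne
  have hsub : subtree! (node (c0 :: rest)) [0] = c0 := by
    simp [subtree!, subtreeAt]
  have hns : numSectors (node (c0 :: rest)) = n := by
    rw [numSectors, htn]
    omega
  have hgood : GoodForest [((node (c0 :: rest) : PTree), w)] := by
    rintro d hd
    simp only [List.mem_singleton] at hd
    subst hd
    exact ⟨hts, htne, by rw [hw, hns]⟩
  have key := hfix [((node (c0 :: rest) : PTree), w)] hgood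
  have heps : epsD (A := A) [((node (c0 :: rest) : PTree), w)] = 0 := by
    simp [epsD]
  rw [heps, zero_add] at key
  have hsum : succD (charD (fun x => φ x)) β [((node (c0 :: rest) : PTree), w)] =
      ∑ c ∈ cutsSuccFinset (node (c0 :: rest)),
        charD (fun x => φ x) (trunkPart ((node (c0 :: rest) : PTree), w) c) *
          β (prunePart ((node (c0 :: rest) : PTree), w) c) := by
    rw [succD]
    simp only [forestSplitsSucc, forestSplits, List.map_cons, List.map_nil]
    rw [sum_map_flatMap_singleton]
    simp only [List.append_nil]
    rw [Finset.sum_map_toList]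
  have hrootmem : ({([] : List ℕ)} : Finset (List ℕ)) ∈ cutsSuccFinset (node (c0 :: rest)) := by
    rw [mem_cutsSuccFinset, mem_cutsFinset]
    refine ⟨⟨?_, ?_⟩, [], Finset.mem_singleton_self _, rfl⟩
    · intro v hv
      rw [Finset.mem_singleton] at hv
      subst hv
      rw [mem_internalFinset]
      exact ⟨nil_mem_verticesList _, ⟨c0 :: rest, rfl, by simp⟩⟩
    · intro v hv w' hw' hvw
      rw [Finset.mem_singleton] at hv hw'
      subst hv; subst hw'
      exact absurd rfl hvw
  have hfroot : charD (fun x => φ x) (trunkPart ((node (c0 :: rest) : PTree), w) {([] : List ℕ)}) *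
      β (prunePart ((node (c0 :: rest) : PTree), w) {([] : List ℕ)}) =
      β [((node (c0 :: rest) : PTree), w)] := by
    have htr : trunkTree (node (c0 :: rest)) {([] : List ℕ)} = leaf := by
      rw [trunkTree_singleton]
      rfl
    have hpp : prunePart ((node (c0 :: rest) : PTree), w) {([] : List ℕ)} =
        [((node (c0 :: rest) : PTree), w)] := by
      rw [prunePart_singleton]
      have h1 : subtree! (node (c0 :: rest)) [] = node (c0 :: rest) := rfl
      rw [h1, leavesBefore_nil, List.drop_zero, hns, ← hw, List.take_length]
    simp only [trunkPart, htr, if_pos rfl, hpp]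
    simp [charD]
  have hvanish : ∀ c ∈ (cutsSuccFinset (node (c0 :: rest))).erase {([] : List ℕ)},
      c ≠ {([0] : List ℕ)} →
      charD (fun x => φ x) (trunkPart ((node (c0 :: rest) : PTree), w) c) *
        β (prunePart ((node (c0 :: rest) : PTree), w) c) = 0 := by
    intro c hc hne0
    rw [Finset.mem_erase] at hc
    obtain ⟨hcnil, hcmem⟩ := hc
    rw [mem_cutsSuccFinset, mem_cutsFinset] at hcmem
    obtain ⟨⟨hsubset, -⟩, v, hvmem, hvleft⟩ := hcmem
    have hcard : 1 ≤ c.card := Finset.card_pos.mpr ⟨v, hvmem⟩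
    rcases eq_or_lt_of_le hcard with h1 | h2
    · obtain ⟨u, rfl⟩ := Finset.card_eq_one.mp h1.symm
      rw [Finset.mem_singleton] at hvmem
      subst hvmem
      have hune : v ≠ [] := fun h => hcnil (by rw [h])
      have hune0 : v ≠ [0] := fun h => hne0 (by rw [h])
      have hvint : IsInternalAt (node (c0 :: rest)) v :=
        (mem_internalFinset.mp (hsubset (Finset.mem_singleton_self v))).2
      have hlen : 2 ≤ v.length := by
        rcases v with _ | ⟨a, _ | ⟨b, v'⟩⟩
        · exact absurd rfl hune
        · rw [OnLeftBranch] at hvleft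
          simp only [List.length_cons, List.length_nil, List.replicate_succ,
            List.replicate_zero] at hvleft
          exact absurd hvleft hune0
        · simp
      obtain ⟨k, hk⟩ : ∃ k, v.length = k + 2 := ⟨v.length - 2, by omega⟩
      have hv2 : v = 0 :: 0 :: List.replicate k 0 := by
        conv_lhs => rw [hvleft]
        rw [hk]
        simp [List.replicate_succ]
      rw [hv2] at hvint
      obtain ⟨hne, hncor⟩ := deep_left_trunk (c0 :: rest) (List.cons_ne_nil _ _) _ hvint
      rw [hv2]
      simp only [trunkPart, trunkTree_singleton]
      rw [if_neg hne, charD_pair, if_neg hncor, zero_mul]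
    · have hplen : 2 ≤ (prunePart ((node (c0 :: rest) : PTree), w) c).length := by
        rw [prunePart, List.length_map, sortCut, List.length_mergeSort, Finset.length_toList]
        omega
      rcases hp : prunePart ((node (c0 :: rest) : PTree), w) c with _ | ⟨d1, _ | ⟨d2, F⟩⟩
      · rw [hp] at hplen; simp at hplen
      · rw [hp] at hplen; simp at hplen
      · have hb := hβ.2 [d1] (d2 :: F) (by simp) (by simp)
        rw [List.singleton_append] at hb
        rw [hb, mul_zero]
  by_cases hc0 : c0 = leaf
  · have hzero : ∀ c ∈ (cutsSuccFinset (node (c0 :: rest))).erase {([] : List ℕ)},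
        charD (fun x => φ x) (trunkPart ((node (c0 :: rest) : PTree), w) c) *
          β (prunePart ((node (c0 :: rest) : PTree), w) c) = 0 := by
      intro c hc
      by_cases h0 : c = {([0] : List ℕ)}
      · exfalso
        subst h0
        rw [Finset.mem_erase, mem_cutsSuccFinset, mem_cutsFinset] at hc
        have hint : IsInternalAt (node (c0 :: rest)) [0] :=
          (mem_internalFinset.mp (hc.2.1.1 (Finset.mem_singleton_self _))).2
        obtain ⟨ds, hds, hdsne⟩ := hint
        subst hc0
        rw [show (subtreeAt [0] (node (leaf :: rest))) = some leaf by
          simp [subtreeAt]] at hds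
        injection hds with hds
        injection hds with hds
        exact hdsne hds.symm
      · exact hvanish c hc h0
    rw [key, hsum, ← Finset.add_sum_erase _ _ hrootmem, hfroot,
      Finset.sum_eq_zero hzero, add_zero, hsub, if_pos hc0, mul_zero, add_zero]
  · obtain ⟨ds, rfl⟩ : ∃ ds, c0 = node ds := by
      rcases c0 with ⟨ds⟩
      exact ⟨ds, rfl⟩
    have hds : ds ≠ [] := fun h => hc0 (by rw [h])
    have hc0int : IsInternalAt (node (node ds :: rest)) [0] := by
      refine ⟨ds, ?_, hds⟩
      simp [subtreeAt]
    have hmem0 : ({([0] : List ℕ)} : Finset (List ℕ)) ∈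
        (cutsSuccFinset (node (node ds :: rest))).erase {([] : List ℕ)} := by
      rw [Finset.mem_erase]
      refine ⟨by simp, ?_⟩
      rw [mem_cutsSuccFinset, mem_cutsFinset]
      refine ⟨⟨?_, ?_⟩, [0], Finset.mem_singleton_self _, rfl⟩
      · intro v hv
        rw [Finset.mem_singleton] at hv
        subst hv
        rw [mem_internalFinset]
        exact ⟨zero_mem_verticesList _ _, hc0int⟩
      · intro v hv w' hw' hvw
        rw [Finset.mem_singleton] at hv hw'
        subst hv; subst hw'
        exact absurd rfl hvw
    have htrne : replaceLeaf [0] (node (node ds :: rest)) ≠ leaf := by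
      simp [replaceLeaf]
    have hword : trunkWord (node (node ds :: rest)) {([0] : List ℕ)} w =
        w.drop (numSectors (subtree! (node (node ds :: rest)) [0])) := by
      rw [trunkWord]
      rw [List.filter_congr
        (q := fun i => decide (numSectors (subtree! (node (node ds :: rest)) [0]) ≤ i))
        (fun i _ => ?_)]
      · rw [filter_range_le, map_getD_drop_range]
      · simp only [decide_eq_decide]
        simp only [RemovedIdx, Finset.mem_singleton, exists_eq_left,
          leavesBefore_zero _ htne]
        omega
    have hf0 : charD (fun x => φ x)
          (trunkPart ((node (node ds :: rest) : PTree), w) {([0] : List ℕ)}) *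
        β (prunePart ((node (node ds :: rest) : PTree), w) {([0] : List ℕ)}) =
        charD (fun x => φ x)
            [(replaceLeaf [0] (node (node ds :: rest)),
              w.drop (numSectors (subtree! (node (node ds :: rest)) [0])))] *
          β [(subtree! (node (node ds :: rest)) [0],
              w.take (numSectors (subtree! (node (node ds :: rest)) [0])))] := by
      simp only [trunkPart, trunkTree_singleton]
      rw [if_neg htrne, hword, prunePart_singleton]
      simp only [leavesBefore_zero _ htne, List.drop_zero]
    rw [key, hsum, ← Finset.add_sum_erase _ _ hrootmem, hfroot,
      Finset.sum_eq_single_of_mem _ hmem0 (fun b hb hne => hvanish b hb hne), hf0,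
      hsub, if_neg hc0]
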